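/- E is idempotent: for any finite weight space (X,u), E_{E_u} = E_u, where E_w(x₁,x₂) = max over subsets A with x₁ ∈ A, x₂ ∉ A of min{w(y₁,y₂) : y₁ ∈ A, y₂ ∉ A} for x₁ ≠ x₂ and E_w(x,x) = 0. -/
import Mathlib

def IsWeight {X : Type*} (u : X → X → ℝ) : Prop :=
  (∀ x y, 0 ≤ u x y) ∧ (∀ x y, u x y = u y x) ∧ (∀ x, u x x = 0)

/-- The minimal `u`-distance across the bipartition `{A, Aᶜ}`. -/
noncomputable def crossDist {X : Type*} (u : X → X → ℝ) (A : Set X) : ℝ :=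
  sInf {s : ℝ | ∃ y₁ ∈ A, ∃ y₂ ∉ A, s = u y₁ y₂}

/-- The single-linkage weight: the maximal, over bipartitions separating
`x₁` from `x₂`, minimal cross-distance; `0` on the diagonal. -/
noncomputable def Ebi {X : Type*} [DecidableEq X] (u : X → X → ℝ) (x₁ x₂ : X) : ℝ :=
  if x₁ = x₂ then 0
  else sSup {r : ℝ | ∃ A : Set X, x₁ ∈ A ∧ x₂ ∉ A ∧ r = crossDist u A}

lemma Ebi_eq {X : Type*} [DecidableEq X] (u : X → X → ℝ) {x₁ x₂ : X} (h : x₁ ≠ x₂) :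
    Ebi u x₁ x₂ = sSup {r : ℝ | ∃ A : Set X, x₁ ∈ A ∧ x₂ ∉ A ∧ r = crossDist u A} := by
  simp [Ebi, h]

lemma crossDist_bddBelow {X : Type*} {u : X → X → ℝ} (hpos : ∀ x y, 0 ≤ u x y) (A : Set X) :
    BddBelow {s : ℝ | ∃ y₁ ∈ A, ∃ y₂ ∉ A, s = u y₁ y₂} := by
  refine ⟨0, ?_⟩
  rintro s ⟨y₁, -, y₂, -, rfl⟩
  exact hpos _ _

lemma crossDist_le {X : Type*} {u : X → X → ℝ} (hpos : ∀ x y, 0 ≤ u x y) {A : Set X}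
    {y₁ y₂ : X} (h₁ : y₁ ∈ A) (h₂ : y₂ ∉ A) : crossDist u A ≤ u y₁ y₂ :=
  csInf_le (crossDist_bddBelow hpos A) ⟨y₁, h₁, y₂, h₂, rfl⟩

lemma crossDist_nonneg {X : Type*} {u : X → X → ℝ} (hpos : ∀ x y, 0 ≤ u x y) (A : Set X) :
    0 ≤ crossDist u A := by
  rcases Set.eq_empty_or_nonempty {s : ℝ | ∃ y₁ ∈ A, ∃ y₂ ∉ A, s = u y₁ y₂} with h | h
  · simp [crossDist, h]
  · exact le_csInf h (by rintro s ⟨y₁, -, y₂, -, rfl⟩; exact hpos _ _)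

lemma sep_bddAbove {X : Type*} {u : X → X → ℝ} (hpos : ∀ x y, 0 ≤ u x y) (x₁ x₂ : X) :
    BddAbove {r : ℝ | ∃ A : Set X, x₁ ∈ A ∧ x₂ ∉ A ∧ r = crossDist u A} := by
  refine ⟨u x₁ x₂, ?_⟩
  rintro r ⟨A, h₁, h₂, rfl⟩
  exact crossDist_le hpos h₁ h₂

lemma crossDist_le_Ebi {X : Type*} [DecidableEq X] {u : X → X → ℝ}
    (hpos : ∀ x y, 0 ≤ u x y) {A : Set X} {x₁ x₂ : X} (h₁ : x₁ ∈ A) (h₂ : x₂ ∉ A) :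
    crossDist u A ≤ Ebi u x₁ x₂ := by
  have hne : x₁ ≠ x₂ := fun h => h₂ (h ▸ h₁)
  rw [Ebi_eq u hne]
  exact le_csSup (sep_bddAbove hpos x₁ x₂) ⟨A, h₁, h₂, rfl⟩

lemma Ebi_nonneg {X : Type*} [DecidableEq X] {u : X → X → ℝ}
    (hpos : ∀ x y, 0 ≤ u x y) (x y : X) : 0 ≤ Ebi u x y := by
  by_cases h : x = y
  · simp [Ebi, h]
  · refine le_trans (crossDist_nonneg hpos {x}) (crossDist_le_Ebi hpos rfl ?_)
    simpa [Set.mem_singleton_iff] using Ne.symm h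

lemma crossDist_le_crossDist_Ebi {X : Type*} [DecidableEq X] {u : X → X → ℝ}
    (hpos : ∀ x y, 0 ≤ u x y) (A : Set X) :
    crossDist u A ≤ crossDist (Ebi u) A := by
  by_cases hne : ∃ y₁ ∈ A, ∃ y₂, y₂ ∉ A
  · obtain ⟨y₁, hy₁, y₂, hy₂⟩ := hne
    refine le_csInf ?_ ?_
    · exact ⟨_, y₁, hy₁, y₂, hy₂, rfl⟩
    rintro s ⟨z₁, h₁, z₂, h₂, rfl⟩
    exact crossDist_le_Ebi hpos h₁ h₂
  · have hu : {s : ℝ | ∃ y₁ ∈ A, ∃ y₂ ∉ A, s = u y₁ y₂} = ∅ := by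
      ext s; simp only [Set.mem_setOf_eq, Set.mem_empty_iff_false, iff_false]
      rintro ⟨y₁, h₁, y₂, h₂, rfl⟩; exact hne ⟨y₁, h₁, y₂, h₂⟩
    have hE : {s : ℝ | ∃ y₁ ∈ A, ∃ y₂ ∉ A, s = Ebi u y₁ y₂} = ∅ := by
      ext s; simp only [Set.mem_setOf_eq, Set.mem_empty_iff_false, iff_false]
      rintro ⟨y₁, h₁, y₂, h₂, rfl⟩; exact hne ⟨y₁, h₁, y₂, h₂⟩
    rw [crossDist, crossDist, hu, hE]

theorem Ebi_idempotent {X : Type*} [Fintype X] [DecidableEq X]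
    (u : X → X → ℝ) (hu : IsWeight u) :
    Ebi (Ebi u) = Ebi u := by
  obtain ⟨hpos, hsym, hdiag⟩ := hu
  have hE : ∀ x y, 0 ≤ Ebi u x y := Ebi_nonneg hpos
  funext x₁ x₂
  by_cases h : x₁ = x₂
  · simp [Ebi, h]
  · have hx₂ : x₂ ∉ ({x₁} : Set X) := by simpa [Set.mem_singleton_iff] using Ne.symm h
    rw [Ebi_eq (Ebi u) h, Ebi_eq u h]
    apply le_antisymm
    · refine csSup_le ?_ ?_
      · exact ⟨_, {x₁}, rfl, hx₂, rfl⟩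
      rintro r ⟨A, hA₁, hA₂, rfl⟩
      have h1 : crossDist (Ebi u) A ≤ Ebi u x₁ x₂ := crossDist_le hE hA₁ hA₂
      rwa [Ebi_eq u h] at h1
    · refine csSup_le ?_ ?_
      · exact ⟨_, {x₁}, rfl, hx₂, rfl⟩
      rintro r ⟨A, hA₁, hA₂, rfl⟩
      refine le_trans (crossDist_le_crossDist_Ebi hpos A) (le_csSup ?_ ⟨A, hA₁, hA₂, rfl⟩)
      exact sep_bddAbove hE x₁ x₂
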